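/- In the E-generic bisimulation game, the configurations ⟨(s,t),c,m,*⟩_S and ⟨(s,t),c,m,✓⟩_S are won by the same player, and likewise the configurations ⟨(s,t),c,m,*⟩_D and ⟨(s,t),c,m,✓⟩_D are won by the same player; that is, changing only the reward component of a configuration does not change its winner. -/

import Mathlib

namespace GamesBisim

/-- Parameter values `o` (ordinary) and `b` (branching) for generic bisimulations. -/
inductive XY | o | b
deriving DecidableEq

/-- The faces ☹ (frown) and ☺ (smile). -/
inductive Face | frown | smile
deriving DecidableEq

/-- Rewards: `*` (star) and `✓` (check). -/
inductive Rw | star | check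
deriving DecidableEq

/-- A labelled transition system with states `S`, actions `A` containing a
distinguished silent action `tau`, and a transition relation. -/
structure LTS (S : Type u) (A : Type v) where
  tau : A
  Trans : S → A → S → Prop

namespace LTS

variable {S : Type u} {A : Type v}

/-- A single silent (τ) step. -/
def TauStep (L : LTS S A) (s s' : S) : Prop := L.Trans s L.tau s'

/-- `↠`: the reflexive-transitive closure of the τ-step relation. -/
def TauStar (L : LTS S A) : S → S → Prop := Relation.ReflTransGen L.TauStep

/-- `↠⁺`: the transitive closure of the τ-step relation. -/
def TauPlus (L : LTS S A) : S → S → Prop := Relation.TransGen L.TauStep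

/-- An LTS is non-divergent if it admits no infinite sequence of τ-steps. -/
def NonDivergent (L : LTS S A) : Prop :=
  ¬ ∃ f : ℕ → S, ∀ i, L.TauStep (f i) (f (i + 1))

/-- A symmetric relation `R` is a branching bisimulation. -/
def IsBranchingBisim (L : LTS S A) (R : S → S → Prop) : Prop :=
  (∀ s t, R s t → R t s) ∧
  ∀ s t a s', R s t → L.Trans s a s' →
    (a = L.tau ∧ R s' t) ∨
    ∃ t1 t', L.TauStar t t1 ∧ L.Trans t1 a t' ∧ R s t1 ∧ R s' t'

/-- Branching bisimilarity `≈b`. -/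
def BranchingBisimilar (L : LTS S A) (s t : S) : Prop :=
  ∃ R, L.IsBranchingBisim R ∧ R s t

/-- A symmetric relation `R` is a delay bisimulation. -/
def IsDelayBisim (L : LTS S A) (R : S → S → Prop) : Prop :=
  (∀ s t, R s t → R t s) ∧
  ∀ s t a s', R s t → L.Trans s a s' →
    (a = L.tau ∧ R s' t) ∨
    ∃ t1 t', L.TauStar t t1 ∧ L.Trans t1 a t' ∧ R s' t'

/-- The generalised weak transition `s ↠_{x,R,t} s'`: a weak transition `s ↠ s'`,
which in case `x = b` additionally satisfies `t R s` and `t R s'`. -/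
def GenTauStar (L : LTS S A) (x : XY) (R : S → S → Prop) (t : S) (s s' : S) : Prop :=
  L.TauStar s s' ∧ (x = XY.b → R t s ∧ R t s')

/-- The strong generalised weak transition `s ⟹_{x,R,t} s'`: a weak transition
`s ↠ s'`, which in case `x = b` is witnessed by a finite τ-path all of whose states
are related to `t` by `R`. -/
def SGenTauStar (L : LTS S A) (x : XY) (R : S → S → Prop) (t : S) (s s' : S) : Prop :=
  L.TauStar s s' ∧
  (x = XY.b → R t s ∧ Relation.ReflTransGen (fun u u' => L.TauStep u u' ∧ R t u') s s')

/-- A symmetric relation `R` is an `(x,y)`-generic bisimulation. -/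
def IsGenBisim (L : LTS S A) (x y : XY) (R : S → S → Prop) : Prop :=
  (∀ s t, R s t → R t s) ∧
  ∀ s t a s', R s t → L.Trans s a s' →
    (a = L.tau ∧ R s' t) ∨
    ∃ t1 t2 t', L.GenTauStar x R s t t1 ∧ L.Trans t1 a t2 ∧
      L.GenTauStar y R s' t2 t' ∧ R s' t'

/-- `(x,y)`-generic bisimilarity `≈_{(x,y)}`. -/
def GenBisimilar (L : LTS S A) (x y : XY) (s t : S) : Prop :=
  ∃ R, L.IsGenBisim x y R ∧ R s t

/-- A symmetric relation `R` is an `(x,y)`-generic bisimulation with explicit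
divergence (divergence condition D₄). -/
def IsGenBisimED (L : LTS S A) (x y : XY) (R : S → S → Prop) : Prop :=
  L.IsGenBisim x y R ∧
  ∀ s t, R s t → ∀ f : ℕ → S, f 0 = s → (∀ i, L.TauStep (f i) (f (i + 1))) →
    ∃ t' k, L.TauPlus t t' ∧ R (f k) t'

/-- `(x,y)`-generic bisimilarity with explicit divergence `≈ed_{(x,y)}`. -/
def GenBisimilarED (L : LTS S A) (x y : XY) (s t : S) : Prop :=
  ∃ R, L.IsGenBisimED x y R ∧ R s t

end LTS

/-- A relation `R` has the stuttering property: whenever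
`t₀ →τ t₁ →τ ⋯ →τ t_k` and `t₀ R t_k`, then `t_i R t_j` for all `0 ≤ i,j ≤ k`. -/
def StutteringProperty {S : Type u} {A : Type v} (L : LTS S A) (R : S → S → Prop) : Prop :=
  ∀ (k : ℕ) (t : ℕ → S),
    (∀ i < k, L.TauStep (t i) (t (i + 1))) → R (t 0) (t k) →
    ∀ i j, i ≤ k → j ≤ k → R (t i) (t j)

/-! ## Two-player games

A play is a maximal (finite or infinite) sequence of configurations connected by
moves, represented as `π : ℕ → Option C` which is `none` from the point (if any)
where the play has ended; a play may only end in a configuration whose owner is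
stuck. A strategy for a player is a (positional) function `σ : C → C` which is
required to pick a legal move at every configuration owned by that player admitting
at least one move; a play is consistent with `σ` if every move taken from a
configuration owned by that player follows `σ`. -/

section Games

variable {C : Type u}

/-- `π` is a maximal play of the game with move relation `move`. -/
def IsPlay (move : C → C → Prop) (π : ℕ → Option C) : Prop :=
  (∀ i c d, π i = some c → π (i + 1) = some d → move c d) ∧
  (∀ i c, π i = some c → π (i + 1) = none → ∀ d, ¬ move c d) ∧
  (∀ i, π i = none → π (i + 1) = none)

/-- The play `π` is consistent with strategy `σ` of the player owning the
configurations satisfying `owned`. -/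
def ConsistentWith (owned : C → Prop) (σ : C → C) (π : ℕ → Option C) : Prop :=
  ∀ i c d, π i = some c → owned c → π (i + 1) = some d → d = σ c

/-- `σ` is a valid strategy for the player owning the configurations satisfying
`owned`: it picks a legal move wherever a move exists. -/
def ValidStrategy (owned : C → Prop) (move : C → C → Prop) (σ : C → C) : Prop :=
  ∀ c, owned c → (∃ d, move c d) → move c (σ c)

/-- The play `π` is finite and ends in the configuration `c`. -/
def EndsAt (π : ℕ → Option C) (c : C) : Prop := ∃ i, π i = some c ∧ π (i + 1) = none

/-- The play `π` is infinite. -/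
def InfinitePlay (π : ℕ → Option C) : Prop := ∀ i, π i ≠ none

/-- The Büchi winning condition on infinite plays: the play passes through
infinitely many configurations carrying a `✓` reward. -/
def BuchiWin (reward : C → Prop) (π : ℕ → Option C) : Prop :=
  ∀ n, ∃ i, n ≤ i ∧ ∃ c, π i = some c ∧ reward c

/-- Duplicator wins the play `π`: either the play is finite and Spoiler is stuck,
or the play is infinite and satisfies the winning condition `infWin`. -/
def DupWinsPlay (dupOwned : C → Prop) (infWin : (ℕ → Option C) → Prop)
    (π : ℕ → Option C) : Prop :=
  (∃ c, EndsAt π c ∧ ¬ dupOwned c) ∨ (InfinitePlay π ∧ infWin π)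

/-- Spoiler wins the play `π` (all plays not won by Duplicator). -/
def SpWinsPlay (dupOwned : C → Prop) (infWin : (ℕ → Option C) → Prop)
    (π : ℕ → Option C) : Prop :=
  (∃ c, EndsAt π c ∧ dupOwned c) ∨ (InfinitePlay π ∧ ¬ infWin π)

/-- Duplicator wins the configuration `c`: she has a strategy winning all plays
starting in `c`. -/
def DupWins (dupOwned : C → Prop) (move : C → C → Prop)
    (infWin : (ℕ → Option C) → Prop) (c : C) : Prop :=
  ∃ σ : C → C, ValidStrategy dupOwned move σ ∧
    ∀ π, IsPlay move π → π 0 = some c → ConsistentWith dupOwned σ π →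
      DupWinsPlay dupOwned infWin π

/-- Spoiler wins the configuration `c`: he has a strategy winning all plays
starting in `c`. -/
def SpWins (dupOwned : C → Prop) (move : C → C → Prop)
    (infWin : (ℕ → Option C) → Prop) (c : C) : Prop :=
  ∃ σ : C → C, ValidStrategy (fun d => ¬ dupOwned d) move σ ∧
    ∀ π, IsPlay move π → π 0 = some c → ConsistentWith (fun d => ¬ dupOwned d) σ π →
      SpWinsPlay dupOwned infWin π

end Games

/-! ## The limited branching bisimulation (lbb) game -/

/-- Configurations of the lbb game: Spoiler-owned `⟨(s,t)⟩` and Duplicator-owned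
`⟨(s,t),(a,s')⟩`. -/
inductive LConf (S : Type u) (A : Type v)
  | sp (p : S × S)
  | dup (p : S × S) (c : A × S)

/-- Ownership in the lbb game. -/
def LConf.dupOwned {S : Type u} {A : Type v} : LConf S A → Prop
  | .sp _ => False
  | .dup _ _ => True

/-- Moves of the lbb game. -/
inductive LMove {S : Type u} {A : Type v} (L : LTS S A) : LConf S A → LConf S A → Prop
  | sp1 {s t a s'} (h : L.Trans s a s') :
      LMove L (LConf.sp (s, t)) (LConf.dup (s, t) (a, s'))
  | sp2 {s t a t'} (h : L.Trans t a t') :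
      LMove L (LConf.sp (s, t)) (LConf.dup (t, s) (a, t'))
  | dup1 {u v u'} :
      LMove L (LConf.dup (u, v) (L.tau, u')) (LConf.sp (u', v))
  | dup2 {u v a u' v'} (h : L.Trans v a v') :
      LMove L (LConf.dup (u, v) (a, u')) (LConf.sp (u', v'))
  | dup3 {u v a u' v'} (h : L.TauStep v v') :
      LMove L (LConf.dup (u, v) (a, u')) (LConf.sp (u, v'))

/-- `s ≡lb t`: Duplicator wins the lbb game from `⟨(s,t)⟩_S`; finite plays are won
by Duplicator iff Spoiler is stuck, and all infinite plays are won by Duplicator. -/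
def LTS.lbbEquiv {S : Type u} {A : Type v} (L : LTS S A) (s t : S) : Prop :=
  DupWins LConf.dupOwned (LMove L) (fun _ => True) (LConf.sp (s, t))

/-! ## The branching bisimulation (bb) game -/

/-- Configurations of the bb game: `⟨(s,t),c,r⟩` owned by Spoiler or Duplicator,
with challenge `c ∈ (A × S) ∪ {†}` (where `none` is `†`) and reward `r`. -/
inductive BConf (S : Type u) (A : Type v)
  | sp (p : S × S) (c : Option (A × S)) (r : Rw)
  | dup (p : S × S) (c : Option (A × S)) (r : Rw)

/-- Ownership in the bb game. -/
def BConf.dupOwned {S : Type u} {A : Type v} : BConf S A → Prop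
  | .sp _ _ _ => False
  | .dup _ _ _ => True

/-- The configuration carries a `✓` reward. -/
def BConf.reward {S : Type u} {A : Type v} : BConf S A → Prop
  | .sp _ _ r => r = Rw.check
  | .dup _ _ r => r = Rw.check

/-- Moves of the bb game. -/
inductive BMove {S : Type u} {A : Type v} (L : LTS S A) : BConf S A → BConf S A → Prop
  | sp1star {s t c r a s'} (h : L.Trans s a s') (hc : c = some (a, s') ∨ c = none) :
      BMove L (BConf.sp (s, t) c r) (BConf.dup (s, t) (some (a, s')) Rw.star)
  | sp1check {s t c r a s'} (h : L.Trans s a s')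
      (hc : ¬(c = some (a, s') ∨ c = none)) :
      BMove L (BConf.sp (s, t) c r) (BConf.dup (s, t) (some (a, s')) Rw.check)
  | sp2 {s t c r a t'} (h : L.Trans t a t') :
      BMove L (BConf.sp (s, t) c r) (BConf.dup (t, s) (some (a, t')) Rw.check)
  | dup1 {u v u' r} :
      BMove L (BConf.dup (u, v) (some (L.tau, u')) r) (BConf.sp (u', v) none Rw.check)
  | dup2 {u v a u' v' r} (h : L.Trans v a v') :
      BMove L (BConf.dup (u, v) (some (a, u')) r) (BConf.sp (u', v') none Rw.check)
  | dup3 {u v a u' v' r} (h : L.TauStep v v') :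
      BMove L (BConf.dup (u, v) (some (a, u')) r)
        (BConf.sp (u, v') (some (a, u')) Rw.star)

/-- `s ≡b t`: Duplicator wins the bb game from `⟨(s,t),†,*⟩_S`, where infinite
plays are won by Duplicator iff they yield infinitely many `✓` rewards. -/
def LTS.bbEquiv {S : Type u} {A : Type v} (L : LTS S A) (s t : S) : Prop :=
  DupWins BConf.dupOwned (BMove L) (BuchiWin BConf.reward) (BConf.sp (s, t) none Rw.star)

/-! ## The generic bisimulation (gb) game, and its explicit-divergence variant -/

/-- Configurations of the generic games: `⟨(s,t),c,m,r⟩` owned by Spoiler or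
Duplicator, with challenge `c ∈ (A × S) ∪ {†}`, partial match
`m ∈ (S × {☹,☺}) ∪ {†}` and reward `r`. -/
inductive GConf (S : Type u) (A : Type v)
  | sp (p : S × S) (c : Option (A × S)) (m : Option (S × Face)) (r : Rw)
  | dup (p : S × S) (c : Option (A × S)) (m : Option (S × Face)) (r : Rw)

/-- Ownership in the generic games. -/
def GConf.dupOwned {S : Type u} {A : Type v} : GConf S A → Prop
  | .sp _ _ _ _ => False
  | .dup _ _ _ _ => True

/-- The configuration carries a `✓` reward. -/
def GConf.reward {S : Type u} {A : Type v} : GConf S A → Prop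
  | .sp _ _ _ r => r = Rw.check
  | .dup _ _ _ r => r = Rw.check

/-- Moves of the `E`-generic bisimulation game. The parameter `rw1` is the reward
handed out by Duplicator's rule (1): `✓` in the gb game, `*` in the gbed game. -/
inductive GMove {S : Type u} {A : Type v} (L : LTS S A) (E : Set Face) (rw1 : Rw) :
    GConf S A → GConf S A → Prop
  | sp1 {s t c m r} (hc : c ≠ none) :
      GMove L E rw1 (GConf.sp (s, t) c m r) (GConf.dup (s, t) c m Rw.star)
  | sp2a {s t m r a s'} (h : L.Trans s a s') :
      GMove L E rw1 (GConf.sp (s, t) none m r)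
        (GConf.dup (s, t) (some (a, s')) (some (t, Face.frown)) Rw.star)
  | sp2b {s t c m r a s'} (h : L.Trans s a s') (hc : c ≠ some (a, s')) :
      GMove L E rw1 (GConf.sp (s, t) c m r)
        (GConf.dup (s, t) (some (a, s')) (some (t, Face.frown)) Rw.check)
  | sp3 {s t c m r a t'} (h : L.Trans t a t') :
      GMove L E rw1 (GConf.sp (s, t) c m r)
        (GConf.dup (t, s) (some (a, t')) (some (s, Face.frown)) Rw.check)
  | dup1 {u v u' vb f r} :
      GMove L E rw1 (GConf.dup (u, v) (some (L.tau, u')) (some (vb, f)) r)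
        (GConf.sp (u', vb) none none rw1)
  | dup2a {u v a u' vb v' r} (h : L.Trans vb a v') :
      GMove L E rw1 (GConf.dup (u, v) (some (a, u')) (some (vb, Face.frown)) r)
        (GConf.sp (u', v') (some (a, u')) (some (v', Face.smile)) Rw.star)
  | dup2b {u v a u' vb v' r} (h : L.Trans vb a v') :
      GMove L E rw1 (GConf.dup (u, v) (some (a, u')) (some (vb, Face.frown)) r)
        (GConf.sp (u', v') none none Rw.check)
  | dup2c {u v a u' vb v' r} (h : L.Trans vb a v') (hE : Face.smile ∈ E) :
      GMove L E rw1 (GConf.dup (u, v) (some (a, u')) (some (vb, Face.frown)) r)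
        (GConf.sp (u, v) (some (a, u')) (some (v', Face.smile)) Rw.star)
  | dup3a {u v a u' vb f v' r} (h : L.TauStep vb v') :
      GMove L E rw1 (GConf.dup (u, v) (some (a, u')) (some (vb, f)) r)
        (GConf.sp (u, v') (some (a, u')) (some (v', f)) Rw.star)
  | dup3b {u v a u' vb v' r} (h : L.TauStep vb v') :
      GMove L E rw1 (GConf.dup (u, v) (some (a, u')) (some (vb, Face.smile)) r)
        (GConf.sp (u', v') none none Rw.check)
  | dup3c {u v a u' vb f v' r} (h : L.TauStep vb v') (hE : f ∈ E) :
      GMove L E rw1 (GConf.dup (u, v) (some (a, u')) (some (vb, f)) r)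
        (GConf.sp (u, v) (some (a, u')) (some (v', f)) Rw.star)

/-- `E(x,y) ⊆ {☹,☺}`: the smallest set containing `☹` when `x = o` and `☺` when
`y = o`. -/
def Exy (x y : XY) : Set Face :=
  {f | (f = Face.frown ∧ x = XY.o) ∨ (f = Face.smile ∧ y = XY.o)}

/-- `s ≡_E t`: Duplicator wins the `E`-generic bisimulation game from
`⟨(s,t),†,†,*⟩_S`; infinite plays are won by Duplicator iff they yield infinitely
many `✓` rewards. -/
def LTS.gbEquiv {S : Type u} {A : Type v} (L : LTS S A) (E : Set Face) (s t : S) : Prop :=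
  DupWins GConf.dupOwned (GMove L E Rw.check) (BuchiWin GConf.reward)
    (GConf.sp (s, t) none none Rw.star)

/-- `s ≡ed_E t`: Duplicator wins the `E`-generic bisimulation with explicit
divergence game from `⟨(s,t),†,†,*⟩_S`. -/
def LTS.gbedEquiv {S : Type u} {A : Type v} (L : LTS S A) (E : Set Face) (s t : S) : Prop :=
  DupWins GConf.dupOwned (GMove L E Rw.star) (BuchiWin GConf.reward)
    (GConf.sp (s, t) none none Rw.star)

/-- The abstraction function `f(⟨(s,t),c,m,r⟩) = ⟨(s,t),c,r⟩` from configurations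
of the generic game to configurations of the bb game, preserving ownership. -/
def fabs {S : Type u} {A : Type v} : GConf S A → BConf S A
  | .sp p c _ r => .sp p c r
  | .dup p c _ r => .dup p c r


/-! ### Auxiliary machinery for Statement 11 -/

section TransferAux

variable {C : Type*}

lemma play_none_mono {move : C → C → Prop} {π : ℕ → Option C} (h : IsPlay move π)
    {a b : ℕ} (hab : a ≤ b) (ha : π a = none) : π b = none := by
  induction b, hab using Nat.le_induction with
  | base => exact ha
  | succ n _ ih => exact h.2.2 n ih

lemma play_some_of_le {move : C → C → Prop} {π : ℕ → Option C} (h : IsPlay move π)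
    {a b : ℕ} (hab : a ≤ b) {x : C} (hb : π b = some x) : π a ≠ none := by
  intro hn
  rw [play_none_mono h hab hn] at hb
  exact nomatch hb

lemma winPlay_shift (Lose : C → Prop) (IW : (ℕ → Option C) → Prop)
    {move : C → C → Prop} (φ : ℕ → Option C) (j : ℕ) (hp : IsPlay move φ)
    {x : C} (hj : φ j = some x)
    (hIW : IW φ → IW (fun k => φ (j + k))) :
    ((∃ e, EndsAt φ e ∧ Lose e) ∨ (InfinitePlay φ ∧ IW φ)) →
    ((∃ e, EndsAt (fun k => φ (j + k)) e ∧ Lose e) ∨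
      (InfinitePlay (fun k => φ (j + k)) ∧ IW (fun k => φ (j + k)))) := by
  rintro (⟨e, ⟨i, hi, hi1⟩, he⟩ | ⟨hinf, hiw⟩)
  · left
    have hji : j ≤ i := by
      by_contra hlt
      push_neg at hlt
      have := play_none_mono hp (show i + 1 ≤ j by omega) hi1
      rw [this] at hj
      exact nomatch hj
    refine ⟨e, ⟨i - j, ?_, ?_⟩, he⟩
    · show φ (j + (i - j)) = some e
      rw [show j + (i - j) = i by omega]; exact hi
    · show φ (j + (i - j + 1)) = none
      rw [show j + (i - j + 1) = i + 1 by omega]; exact hi1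
  · exact Or.inr ⟨fun k => hinf (j + k), hIW hiw⟩

lemma winPlay_head (Lose : C → Prop) (IW : (ℕ → Option C) → Prop)
    {c c' : C} (hLose : Lose c ↔ Lose c')
    (ρ π : ℕ → Option C) (hρ0 : ρ 0 = some c) (hπ0 : π 0 = some c')
    (htail : ∀ k, 1 ≤ k → ρ k = π k)
    (hIW : IW ρ → IW π) :
    ((∃ e, EndsAt ρ e ∧ Lose e) ∨ (InfinitePlay ρ ∧ IW ρ)) →
    ((∃ e, EndsAt π e ∧ Lose e) ∨ (InfinitePlay π ∧ IW π)) := by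
  rintro (⟨e, ⟨i, hi, hi1⟩, he⟩ | ⟨hinf, hiw⟩)
  · left
    rcases Nat.eq_zero_or_pos i with rfl | h0
    · have hec : e = c := by rw [hρ0] at hi; exact (Option.some.inj hi).symm
      refine ⟨c', ⟨0, hπ0, ?_⟩, hLose.mp (hec ▸ he)⟩
      rw [← htail 1 le_rfl]; exact hi1
    · exact ⟨e, ⟨i, by rw [← htail i h0]; exact hi,
        by rw [← htail (i + 1) (by omega)]; exact hi1⟩, he⟩
  · refine Or.inr ⟨fun k => ?_, hIW hiw⟩
    rcases Nat.eq_zero_or_pos k with rfl | hk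
    · rw [hπ0]; exact Option.some_ne_none _
    · rw [← htail k hk]; exact hinf k

lemma buchi_shift (reward : C → Prop) (φ : ℕ → Option C) (j : ℕ) :
    BuchiWin reward φ → BuchiWin reward (fun k => φ (j + k)) := by
  intro hb n
  obtain ⟨i, hni, e, hie, hre⟩ := hb (n + j)
  refine ⟨i - j, by omega, e, ?_, hre⟩
  show φ (j + (i - j)) = some e
  rw [show j + (i - j) = i by omega]; exact hie

lemma not_buchi_shift (reward : C → Prop) (φ : ℕ → Option C) (j : ℕ) :
    ¬ BuchiWin reward φ → ¬ BuchiWin reward (fun k => φ (j + k)) := by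
  intro hnb hB
  apply hnb
  intro n
  obtain ⟨i, hni, e, hie, hre⟩ := hB n
  exact ⟨j + i, by omega, e, hie, hre⟩

lemma buchi_head (reward : C → Prop) (ρ π : ℕ → Option C)
    (htail : ∀ k, 1 ≤ k → ρ k = π k) :
    BuchiWin reward ρ → BuchiWin reward π := by
  intro hb n
  obtain ⟨i, hni, e, hie, hre⟩ := hb (n + 1)
  exact ⟨i, by omega, e, by rw [← htail i (by omega)]; exact hie, hre⟩

lemma not_buchi_head (reward : C → Prop) (ρ π : ℕ → Option C)
    (htail : ∀ k, 1 ≤ k → ρ k = π k) :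
    ¬ BuchiWin reward ρ → ¬ BuchiWin reward π := by
  intro hnb hB
  exact hnb (buchi_head reward π ρ (fun k hk => (htail k hk).symm) hB)

/-- The key generic transfer lemma: if two configurations `c`, `c'` have the same
outgoing moves and agree on ownership, and the winning condition tolerates shifts
and changes of the initial configuration, then a winning strategy from `c` yields
one from `c'`. -/
lemma wins_transfer (owned : C → Prop) (move : C → C → Prop)
    (WinPlay : (ℕ → Option C) → Prop) (c c' : C)
    (hne : c ≠ c')
    (hm : ∀ d, move c d ↔ move c' d)
    (hOwn : owned c ↔ owned c')
    (hT1 : ∀ (φ : ℕ → Option C) (j : ℕ), IsPlay move φ → φ j = some c' → WinPlay φ →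
        WinPlay (fun k => φ (j + k)))
    (hT2 : ∀ ρ π : ℕ → Option C, ρ 0 = some c → π 0 = some c' →
        (∀ k, 1 ≤ k → ρ k = π k) → WinPlay ρ → WinPlay π)
    (h : ∃ σ, ValidStrategy owned move σ ∧ ∀ π, IsPlay move π → π 0 = some c →
        ConsistentWith owned σ π → WinPlay π) :
    ∃ σ, ValidStrategy owned move σ ∧ ∀ π, IsPlay move π → π 0 = some c' →
        ConsistentWith owned σ π → WinPlay π := by
  classical
  obtain ⟨σ, hv, hw⟩ := h
  by_cases H : ∃ (ρ : ℕ → Option C) (j : ℕ), IsPlay move ρ ∧ ρ 0 = some c ∧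
      ConsistentWith owned σ ρ ∧ ρ j = some c'
  · obtain ⟨ρ, j, hρp, hρ0, hρc, hρj⟩ := H
    have hj : 0 < j := by
      rcases Nat.eq_zero_or_pos j with rfl | h
      · rw [hρ0] at hρj; exact absurd (Option.some.inj hρj) hne
      · exact h
    refine ⟨σ, hv, fun π hπp hπ0 hπc => ?_⟩
    set φ : ℕ → Option C := fun k => if k < j then ρ k else π (k - j) with hφdef
    have hφlt : ∀ k, k < j → φ k = ρ k := by
      intro k hk; simp only [hφdef]; exact if_pos hk
    have hφge : ∀ k, j ≤ k → φ k = π (k - j) := by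
      intro k hk; simp only [hφdef]; exact if_neg (by omega)
    have hφj : φ j = some c' := by
      rw [hφge j le_rfl, Nat.sub_self]; exact hπ0
    have hρsome : ∀ k, k ≤ j → ρ k ≠ none := fun k hk => play_some_of_le hρp hk hρj
    have hplay : IsPlay move φ := by
      refine ⟨?_, ?_, ?_⟩
      · intro i a b ha hb
        rcases Nat.lt_or_ge i j with hi | hi
        · rcases Nat.lt_or_ge (i + 1) j with hi1 | hi1
          · exact hρp.1 i a b (by rw [hφlt i hi] at ha; exact ha)
              (by rw [hφlt (i + 1) hi1] at hb; exact hb)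
          · have hij : i + 1 = j := by omega
            have hbc : b = c' := by
              have h2 := hφj
              rw [← hij] at h2
              rw [hb] at h2
              exact Option.some.inj h2
            refine hρp.1 i a b (by rw [hφlt i hi] at ha; exact ha) ?_
            rw [hij, hbc]; exact hρj
        · refine hπp.1 (i - j) a b (by rw [hφge i hi] at ha; exact ha) ?_
          have hb2 := hb
          rw [hφge (i + 1) (by omega), show i + 1 - j = i - j + 1 by omega] at hb2
          exact hb2
      · intro i a ha hnone
        rcases Nat.lt_or_ge (i + 1) j with hi1 | hi1
        · rw [hφlt (i + 1) hi1] at hnone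
          exact (hρsome (i + 1) (by omega) hnone).elim
        · rcases Nat.lt_or_ge i j with hi | hi
          · have hij : i + 1 = j := by omega
            rw [hij, hφj] at hnone
            exact nomatch hnone
          · intro d hd
            refine hπp.2.1 (i - j) a (by rw [hφge i hi] at ha; exact ha) ?_ d hd
            have h2 := hnone
            rw [hφge (i + 1) (by omega), show i + 1 - j = i - j + 1 by omega] at h2
            exact h2
      · intro i hnone
        rcases Nat.lt_or_ge i j with hi | hi
        · rw [hφlt i hi] at hnone
          exact (hρsome i (by omega) hnone).elim
        · rw [hφge (i + 1) (by omega), show i + 1 - j = i - j + 1 by omega]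
          exact hπp.2.2 (i - j) (by rw [hφge i hi] at hnone; exact hnone)
    have hcons : ConsistentWith owned σ φ := by
      intro i d e hd ho he
      rcases Nat.lt_or_ge i j with hi | hi
      · rcases Nat.lt_or_ge (i + 1) j with hi1 | hi1
        · exact hρc i d e (by rw [hφlt i hi] at hd; exact hd) ho
            (by rw [hφlt (i + 1) hi1] at he; exact he)
        · have hij : i + 1 = j := by omega
          have hec : e = c' := by
            have h2 := hφj
            rw [← hij] at h2
            rw [he] at h2
            exact Option.some.inj h2
          exact hρc i d e (by rw [hφlt i hi] at hd; exact hd) ho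
            (by rw [hij, hec]; exact hρj)
      · refine hπc (i - j) d e (by rw [hφge i hi] at hd; exact hd) ho ?_
        have h2 := he
        rw [hφge (i + 1) (by omega), show i + 1 - j = i - j + 1 by omega] at h2
        exact h2
    have hφ0 : φ 0 = some c := by rw [hφlt 0 hj]; exact hρ0
    have hwin := hT1 φ j hplay hφj (hw φ hplay hφ0 hcons)
    have hfun : (fun k => φ (j + k)) = π := by
      funext k
      rw [hφge (j + k) (by omega), show j + k - j = k by omega]
    rwa [hfun] at hwin
  · set σ' : C → C := fun d => if d = c' then σ c else σ d with hσ'def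
    have hσ'c' : σ' c' = σ c := by simp [hσ'def]
    have hσ'ne : ∀ d, d ≠ c' → σ' d = σ d := by
      intro d hd; simp [hσ'def, hd]
    have hv' : ValidStrategy owned move σ' := by
      intro d hod hex
      by_cases hd : d = c'
      · subst hd
        rw [hσ'c']
        obtain ⟨e, he⟩ := hex
        exact (hm _).mp (hv c (hOwn.mpr hod) ⟨e, (hm e).mpr he⟩)
      · rw [hσ'ne d hd]; exact hv d hod hex
    refine ⟨σ', hv', fun π hπp hπ0 hπc => ?_⟩
    have noRev : ∀ k, 1 ≤ k → π k ≠ some c' := by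
      by_cases Hrev : ∃ k, 1 ≤ k ∧ π k = some c'
      · exfalso
        obtain ⟨hj1, hjc⟩ : 1 ≤ Nat.find Hrev ∧ π (Nat.find Hrev) = some c' :=
          Nat.find_spec Hrev
        set j := Nat.find Hrev with hjdef
        have hmin : ∀ m, m < j → ¬(1 ≤ m ∧ π m = some c') := fun m hm' =>
          Nat.find_min Hrev hm'
        have hπsome : ∀ k, k ≤ j → π k ≠ none := fun k hk => play_some_of_le hπp hk hjc
        set F : Option C → Option C := fun o => o.bind (fun d =>
          if hx : ∃ e, move d e then some (if owned d then σ d else hx.choose) else none)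
          with hFdef
        have hFnone : F none = none := rfl
        have hFsome : ∀ d : C, F (some d) =
            if hx : ∃ e, move d e then some (if owned d then σ d else hx.choose)
            else none := fun d => rfl
        set ρ : ℕ → Option C := fun k => if k ≤ j then (if k = 0 then some c else π k)
          else F^[k - j] (some c') with hρdef
        have hρ0 : ρ 0 = some c := by
          show (if 0 ≤ j then if 0 = 0 then some c else π 0
            else F^[0 - j] (some c')) = some c
          rw [if_pos (Nat.zero_le j), if_pos (rfl : (0:ℕ) = 0)]
        have hρmid : ∀ k, 1 ≤ k → k ≤ j → ρ k = π k := by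
          intro k h1 h2
          show (if k ≤ j then if k = 0 then some c else π k
            else F^[k - j] (some c')) = π k
          rw [if_pos h2, if_neg (show ¬ k = 0 by omega)]
        have hρj : ρ j = some c' := by rw [hρmid j hj1 le_rfl]; exact hjc
        have hρge : ∀ k, j ≤ k → ρ k = F^[k - j] (some c') := by
          intro k hk
          rcases eq_or_lt_of_le hk with rfl | hk'
          · simp only [Nat.sub_self, Function.iterate_zero_apply]
            exact hρj
          · show (if k ≤ j then if k = 0 then some c else π k
              else F^[k - j] (some c')) = F^[k - j] (some c')
            rw [if_neg (show ¬ k ≤ j by omega)]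
        have hstep : ∀ i, j ≤ i → ρ (i + 1) = F (ρ i) := by
          intro i hi
          rw [hρge i hi, hρge (i + 1) (by omega), show i + 1 - j = (i - j) + 1 by omega,
            Function.iterate_succ_apply']
        have hρplay : IsPlay move ρ := by
          refine ⟨?_, ?_, ?_⟩
          · intro i a b ha hb
            rcases Nat.lt_or_ge i j with hi | hi
            · rcases Nat.eq_zero_or_pos i with rfl | hipos
              · have hac : a = c := by rw [hρ0] at ha; exact (Option.some.inj ha).symm
                have hb' : π 1 = some b := by
                  rw [← hρmid 1 le_rfl (by omega)]; exact hb
                subst hac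
                exact (hm b).mpr (hπp.1 0 c' b hπ0 hb')
              · exact hπp.1 i a b (by rw [hρmid i hipos (by omega)] at ha; exact ha)
                  (by rw [hρmid (i + 1) (by omega) (by omega)] at hb; exact hb)
            · have hb' := hb
              rw [hstep i hi, ha, hFsome] at hb'
              by_cases hx : ∃ e, move a e
              · rw [dif_pos hx] at hb'
                have hbe : b = if owned a then σ a else hx.choose :=
                  (Option.some.inj hb').symm
                by_cases hoa : owned a
                · rw [hbe, if_pos hoa]; exact hv a hoa hx
                · rw [hbe, if_neg hoa]; exact hx.choose_spec
              · rw [dif_neg hx] at hb'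
                exact absurd hb'.symm (Option.some_ne_none b)
          · intro i a ha hnone
            rcases Nat.lt_or_ge i j with hi | hi
            · rw [hρmid (i + 1) (by omega) (by omega)] at hnone
              exact (hπsome (i + 1) (by omega) hnone).elim
            · intro d hd
              rw [hstep i hi, ha, hFsome] at hnone
              by_cases hx : ∃ e, move a e
              · rw [dif_pos hx] at hnone; exact nomatch hnone
              · exact hx ⟨d, hd⟩
          · intro i hnone
            rcases Nat.lt_or_ge i j with hi | hi
            · rcases Nat.eq_zero_or_pos i with rfl | hipos
              · rw [hρ0] at hnone; exact nomatch hnone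
              · rw [hρmid i hipos (by omega)] at hnone
                exact (hπsome i (by omega) hnone).elim
            · rw [hstep i hi, hnone]; exact hFnone
        have hρcons : ConsistentWith owned σ ρ := by
          intro i d e hd ho he
          rcases Nat.lt_or_ge i j with hi | hi
          · rcases Nat.eq_zero_or_pos i with rfl | hipos
            · have hdc : d = c := by rw [hρ0] at hd; exact (Option.some.inj hd).symm
              have he' : π 1 = some e := by rw [← hρmid 1 le_rfl (by omega)]; exact he
              have ho' : owned c' := by rw [hdc] at ho; exact hOwn.mp ho
              have := hπc 0 c' e hπ0 ho' he'
              rw [this, hσ'c', hdc]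
            · have hd' : π i = some d := by rw [← hρmid i hipos (by omega)]; exact hd
              have he' : π (i + 1) = some e := by
                rw [← hρmid (i + 1) (by omega) (by omega)]; exact he
              have hdne : d ≠ c' := by
                intro hdcc
                exact hmin i hi ⟨hipos, by rw [hdcc] at hd'; exact hd'⟩
              rw [hπc i d e hd' ho he', hσ'ne d hdne]
          · have he' := he
            rw [hstep i hi, hd, hFsome] at he'
            by_cases hx : ∃ e2, move d e2
            · rw [dif_pos hx, if_pos ho] at he'
              exact (Option.some.inj he').symm
            · rw [dif_neg hx] at he'
              exact nomatch he'
        exact H ⟨ρ, j, hρplay, hρ0, hρcons, hρj⟩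
      · push_neg at Hrev
        exact Hrev
    set ρ : ℕ → Option C := fun k => if k = 0 then some c else π k with hρdef
    have hρ0 : ρ 0 = some c := by
      show (if 0 = 0 then some c else π 0) = some c
      rw [if_pos (rfl : (0:ℕ) = 0)]
    have hρpos : ∀ k, 1 ≤ k → ρ k = π k := by
      intro k hk
      show (if k = 0 then some c else π k) = π k
      rw [if_neg (show ¬ k = 0 by omega)]
    have hρplay : IsPlay move ρ := by
      refine ⟨?_, ?_, ?_⟩
      · intro i a b ha hb
        rcases Nat.eq_zero_or_pos i with rfl | hipos
        · have hac : a = c := by rw [hρ0] at ha; exact (Option.some.inj ha).symm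
          have hb' : π 1 = some b := by rw [← hρpos 1 le_rfl]; exact hb
          subst hac
          exact (hm b).mpr (hπp.1 0 c' b hπ0 hb')
        · exact hπp.1 i a b (by rw [hρpos i hipos] at ha; exact ha)
            (by rw [hρpos (i + 1) (by omega)] at hb; exact hb)
      · intro i a ha hnone
        rcases Nat.eq_zero_or_pos i with rfl | hipos
        · have hac : a = c := by rw [hρ0] at ha; exact (Option.some.inj ha).symm
          have hn' : π 1 = none := by rw [← hρpos 1 le_rfl]; exact hnone
          intro d hd
          refine hπp.2.1 0 c' hπ0 hn' d ?_
          rw [hac] at hd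
          exact (hm d).mp hd
        · exact hπp.2.1 i a (by rw [hρpos i hipos] at ha; exact ha)
            (by rw [hρpos (i + 1) (by omega)] at hnone; exact hnone)
      · intro i hnone
        rcases Nat.eq_zero_or_pos i with rfl | hipos
        · rw [hρ0] at hnone; exact nomatch hnone
        · rw [hρpos (i + 1) (by omega)]
          exact hπp.2.2 i (by rw [hρpos i hipos] at hnone; exact hnone)
    have hρcons : ConsistentWith owned σ ρ := by
      intro i d e hd ho he
      rcases Nat.eq_zero_or_pos i with rfl | hipos
      · have hdc : d = c := by rw [hρ0] at hd; exact (Option.some.inj hd).symm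
        have he' : π 1 = some e := by rw [← hρpos 1 le_rfl]; exact he
        have ho' : owned c' := by rw [hdc] at ho; exact hOwn.mp ho
        have := hπc 0 c' e hπ0 ho' he'
        rw [this, hσ'c', hdc]
      · have hd' : π i = some d := by rw [← hρpos i hipos]; exact hd
        have he' : π (i + 1) = some e := by rw [← hρpos (i + 1) (by omega)]; exact he
        have hdne : d ≠ c' := by
          intro hdcc
          exact noRev i hipos (by rw [hdcc] at hd'; exact hd')
        rw [hπc i d e hd' ho he', hσ'ne d hdne]
    exact hT2 ρ π hρ0 hπ0 hρpos (hw ρ hρplay hρ0 hρcons)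

end TransferAux

section GMoveAux

variable {S : Type u} {A : Type v}

lemma gmove_sp_reward_iff (L : LTS S A) (E : Set Face) (rw1 : Rw) (s t : S)
    (c : Option (A × S)) (m : Option (S × Face)) (r r' : Rw) (d : GConf S A) :
    GMove L E rw1 (GConf.sp (s, t) c m r) d ↔ GMove L E rw1 (GConf.sp (s, t) c m r') d := by
  have aux : ∀ (r1 r2 : Rw) (d : GConf S A),
      GMove L E rw1 (GConf.sp (s, t) c m r1) d →
      GMove L E rw1 (GConf.sp (s, t) c m r2) d := by
    intro r1 r2 d h
    cases h with
    | sp1 hc => exact GMove.sp1 hc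
    | sp2a h => exact GMove.sp2a h
    | sp2b h hc => exact GMove.sp2b h hc
    | sp3 h => exact GMove.sp3 h
  exact ⟨aux r r' d, aux r' r d⟩

lemma gmove_dup_reward_iff (L : LTS S A) (E : Set Face) (rw1 : Rw) (u v : S)
    (c : Option (A × S)) (m : Option (S × Face)) (r r' : Rw) (d : GConf S A) :
    GMove L E rw1 (GConf.dup (u, v) c m r) d ↔ GMove L E rw1 (GConf.dup (u, v) c m r') d := by
  have aux : ∀ (r1 r2 : Rw) (d : GConf S A),
      GMove L E rw1 (GConf.dup (u, v) c m r1) d →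
      GMove L E rw1 (GConf.dup (u, v) c m r2) d := by
    intro r1 r2 d h
    cases h with
    | dup1 => exact GMove.dup1
    | dup2a h => exact GMove.dup2a h
    | dup2b h => exact GMove.dup2b h
    | dup2c h hE => exact GMove.dup2c h hE
    | dup3a h => exact GMove.dup3a h
    | dup3b h => exact GMove.dup3b h
    | dup3c h hE => exact GMove.dup3c h hE
  exact ⟨aux r r' d, aux r' r d⟩

end GMoveAux


/-- In the `E`-generic bisimulation game, changing only the reward
component of a configuration does not change its winner: the configurations
`⟨(s,t),c,m,*⟩_S` and `⟨(s,t),c,m,✓⟩_S` are won by the same player, and likewise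
for the Duplicator-owned configurations `⟨(s,t),c,m,*⟩_D` and `⟨(s,t),c,m,✓⟩_D`. -/
theorem gb_winner_independent_of_reward {S : Type u} {A : Type v} (L : LTS S A)
    (E : Set Face) (p : S × S) (c : Option (A × S)) (m : Option (S × Face)) :
    (DupWins GConf.dupOwned (GMove L E Rw.check) (BuchiWin GConf.reward)
        (GConf.sp p c m Rw.star) ↔
      DupWins GConf.dupOwned (GMove L E Rw.check) (BuchiWin GConf.reward)
        (GConf.sp p c m Rw.check)) ∧
    (SpWins GConf.dupOwned (GMove L E Rw.check) (BuchiWin GConf.reward)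
        (GConf.sp p c m Rw.star) ↔
      SpWins GConf.dupOwned (GMove L E Rw.check) (BuchiWin GConf.reward)
        (GConf.sp p c m Rw.check)) ∧
    (DupWins GConf.dupOwned (GMove L E Rw.check) (BuchiWin GConf.reward)
        (GConf.dup p c m Rw.star) ↔
      DupWins GConf.dupOwned (GMove L E Rw.check) (BuchiWin GConf.reward)
        (GConf.dup p c m Rw.check)) ∧
    (SpWins GConf.dupOwned (GMove L E Rw.check) (BuchiWin GConf.reward)
        (GConf.dup p c m Rw.star) ↔
      SpWins GConf.dupOwned (GMove L E Rw.check) (BuchiWin GConf.reward)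
        (GConf.dup p c m Rw.check)) := by
  obtain ⟨s, t⟩ := p
  have hnesp : ∀ r r' : Rw, r ≠ r' →
      (GConf.sp (s, t) c m r : GConf S A) ≠ GConf.sp (s, t) c m r' := by
    intro r r' hrr hEq
    injection hEq with h1 h2 h3 h4
    exact hrr h4
  have hnedup : ∀ r r' : Rw, r ≠ r' →
      (GConf.dup (s, t) c m r : GConf S A) ≠ GConf.dup (s, t) c m r' := by
    intro r r' hrr hEq
    injection hEq with h1 h2 h3 h4
    exact hrr h4
  have hdT1 : ∀ (c' : GConf S A) (φ : ℕ → Option (GConf S A)) (j : ℕ),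
      IsPlay (GMove L E Rw.check) φ → φ j = some c' →
      DupWinsPlay GConf.dupOwned (BuchiWin GConf.reward) φ →
      DupWinsPlay GConf.dupOwned (BuchiWin GConf.reward) (fun k => φ (j + k)) :=
    fun _ φ j hp hj hw =>
      winPlay_shift (fun e => ¬ GConf.dupOwned e) (BuchiWin GConf.reward) φ j hp hj
        (buchi_shift GConf.reward φ j) hw
  have hsT1 : ∀ (c' : GConf S A) (φ : ℕ → Option (GConf S A)) (j : ℕ),
      IsPlay (GMove L E Rw.check) φ → φ j = some c' →
      SpWinsPlay GConf.dupOwned (BuchiWin GConf.reward) φ →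
      SpWinsPlay GConf.dupOwned (BuchiWin GConf.reward) (fun k => φ (j + k)) :=
    fun _ φ j hp hj hw =>
      winPlay_shift GConf.dupOwned (fun ψ => ¬ BuchiWin GConf.reward ψ) φ j hp hj
        (not_buchi_shift GConf.reward φ j) hw
  have hdT2 : ∀ (cc cc' : GConf S A), (GConf.dupOwned cc ↔ GConf.dupOwned cc') →
      ∀ ρ π : ℕ → Option (GConf S A), ρ 0 = some cc → π 0 = some cc' →
      (∀ k, 1 ≤ k → ρ k = π k) →
      DupWinsPlay GConf.dupOwned (BuchiWin GConf.reward) ρ →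
      DupWinsPlay GConf.dupOwned (BuchiWin GConf.reward) π :=
    fun _ _ hOwn ρ π h0 h0' ht hw =>
      winPlay_head (fun e => ¬ GConf.dupOwned e) (BuchiWin GConf.reward)
        (not_congr hOwn) ρ π h0 h0' ht (buchi_head GConf.reward ρ π ht) hw
  have hsT2 : ∀ (cc cc' : GConf S A), (GConf.dupOwned cc ↔ GConf.dupOwned cc') →
      ∀ ρ π : ℕ → Option (GConf S A), ρ 0 = some cc → π 0 = some cc' →
      (∀ k, 1 ≤ k → ρ k = π k) →
      SpWinsPlay GConf.dupOwned (BuchiWin GConf.reward) ρ →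
      SpWinsPlay GConf.dupOwned (BuchiWin GConf.reward) π :=
    fun _ _ hOwn ρ π h0 h0' ht hw =>
      winPlay_head GConf.dupOwned (fun ψ => ¬ BuchiWin GConf.reward ψ)
        hOwn ρ π h0 h0' ht (not_buchi_head GConf.reward ρ π ht) hw
  refine ⟨⟨fun h => ?_, fun h => ?_⟩, ⟨fun h => ?_, fun h => ?_⟩,
    ⟨fun h => ?_, fun h => ?_⟩, ⟨fun h => ?_, fun h => ?_⟩⟩
  · exact wins_transfer GConf.dupOwned (GMove L E Rw.check)
      (DupWinsPlay GConf.dupOwned (BuchiWin GConf.reward))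
      (GConf.sp (s, t) c m Rw.star) (GConf.sp (s, t) c m Rw.check)
      (hnesp _ _ (by decide))
      (fun d => gmove_sp_reward_iff L E Rw.check s t c m Rw.star Rw.check d)
      Iff.rfl (hdT1 _) (hdT2 _ _ Iff.rfl) h
  · exact wins_transfer GConf.dupOwned (GMove L E Rw.check)
      (DupWinsPlay GConf.dupOwned (BuchiWin GConf.reward))
      (GConf.sp (s, t) c m Rw.check) (GConf.sp (s, t) c m Rw.star)
      (hnesp _ _ (by decide))
      (fun d => gmove_sp_reward_iff L E Rw.check s t c m Rw.check Rw.star d)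
      Iff.rfl (hdT1 _) (hdT2 _ _ Iff.rfl) h
  · exact wins_transfer (fun d => ¬ GConf.dupOwned d) (GMove L E Rw.check)
      (SpWinsPlay GConf.dupOwned (BuchiWin GConf.reward))
      (GConf.sp (s, t) c m Rw.star) (GConf.sp (s, t) c m Rw.check)
      (hnesp _ _ (by decide))
      (fun d => gmove_sp_reward_iff L E Rw.check s t c m Rw.star Rw.check d)
      Iff.rfl (hsT1 _) (hsT2 _ _ Iff.rfl) h
  · exact wins_transfer (fun d => ¬ GConf.dupOwned d) (GMove L E Rw.check)
      (SpWinsPlay GConf.dupOwned (BuchiWin GConf.reward))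
      (GConf.sp (s, t) c m Rw.check) (GConf.sp (s, t) c m Rw.star)
      (hnesp _ _ (by decide))
      (fun d => gmove_sp_reward_iff L E Rw.check s t c m Rw.check Rw.star d)
      Iff.rfl (hsT1 _) (hsT2 _ _ Iff.rfl) h
  · exact wins_transfer GConf.dupOwned (GMove L E Rw.check)
      (DupWinsPlay GConf.dupOwned (BuchiWin GConf.reward))
      (GConf.dup (s, t) c m Rw.star) (GConf.dup (s, t) c m Rw.check)
      (hnedup _ _ (by decide))
      (fun d => gmove_dup_reward_iff L E Rw.check s t c m Rw.star Rw.check d)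
      Iff.rfl (hdT1 _) (hdT2 _ _ Iff.rfl) h
  · exact wins_transfer GConf.dupOwned (GMove L E Rw.check)
      (DupWinsPlay GConf.dupOwned (BuchiWin GConf.reward))
      (GConf.dup (s, t) c m Rw.check) (GConf.dup (s, t) c m Rw.star)
      (hnedup _ _ (by decide))
      (fun d => gmove_dup_reward_iff L E Rw.check s t c m Rw.check Rw.star d)
      Iff.rfl (hdT1 _) (hdT2 _ _ Iff.rfl) h
  · exact wins_transfer (fun d => ¬ GConf.dupOwned d) (GMove L E Rw.check)
      (SpWinsPlay GConf.dupOwned (BuchiWin GConf.reward))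
      (GConf.dup (s, t) c m Rw.star) (GConf.dup (s, t) c m Rw.check)
      (hnedup _ _ (by decide))
      (fun d => gmove_dup_reward_iff L E Rw.check s t c m Rw.star Rw.check d)
      Iff.rfl (hsT1 _) (hsT2 _ _ Iff.rfl) h
  · exact wins_transfer (fun d => ¬ GConf.dupOwned d) (GMove L E Rw.check)
      (SpWinsPlay GConf.dupOwned (BuchiWin GConf.reward))
      (GConf.dup (s, t) c m Rw.check) (GConf.dup (s, t) c m Rw.star)
      (hnedup _ _ (by decide))
      (fun d => gmove_dup_reward_iff L E Rw.check s t c m Rw.check Rw.star d)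
      Iff.rfl (hsT1 _) (hsT2 _ _ Iff.rfl) h

end GamesBisim
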